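/- Let (x_N) and (y_N) be positive sequences with N/y_N → κ⁻¹ for some κ > 0 and x_N − y_N → j. Then N·Ψ(x_N, y_N) → j²/(2κ), where Ψ(a,b) = a·log(a/b) + b − a. -/

import Mathlib

open Filter

noncomputable def Psi (a b : ℝ) : ℝ := a * Real.log (a / b) + b - a

lemma key_est (t : ℝ) (ht : |t| ≤ 1/2) :
    |(1+t) * Real.log (1+t) - t - t^2/2| ≤ 4 * t^2 * |t| := by
  have habs : (0:ℝ) ≤ |t| := abs_nonneg t
  have hlt : |(-t)| < 1 := by rw [abs_neg]; linarith
  have h1 := Real.abs_log_sub_add_sum_range_le hlt 2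
  have hsum : (∑ i ∈ Finset.range 2, (-t) ^ (i + 1) / ((i:ℝ) + 1)) = -t + t^2/2 := by
    simp [Finset.sum_range_succ]; ring
  rw [hsum, abs_neg] at h1
  have h1' : |Real.log (1 + t) - t + t^2/2| ≤ |t|^3 / (1 - |t|) := by
    have : 1 - -t = 1 + t := by ring
    rw [this] at h1
    convert h1 using 2
    ring
  have hE2 : |t|^3 / (1 - |t|) ≤ 2 * |t|^3 := by
    rw [div_le_iff₀ (by linarith)]
    nlinarith [pow_nonneg habs 3]
  set E := Real.log (1 + t) - t + t^2/2 with hE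
  have hX : (1+t) * Real.log (1+t) - t - t^2/2 = (1+t)*E - t^3/2 := by
    rw [hE]; ring
  rw [hX]
  have h3 : |(1+t)*E - t^3/2| ≤ |(1+t)*E| + |t^3/2| := abs_sub _ _
  have h4 : |(1+t)*E| ≤ (3/2) * (2 * |t|^3) := by
    rw [abs_mul]
    have h1t : |1 + t| ≤ 3/2 := by
      calc |1 + t| ≤ |(1:ℝ)| + |t| := abs_add_le _ _
        _ ≤ 3/2 := by rw [abs_one]; linarith
    have hEb : |E| ≤ 2 * |t|^3 := le_trans h1' hE2
    exact mul_le_mul h1t hEb (abs_nonneg _) (by norm_num)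
  have h5 : |t^3/2| = |t|^3/2 := by
    rw [abs_div, abs_pow]; norm_num
  have h6 : 4 * t^2 * |t| = 4 * |t|^3 := by
    rw [← sq_abs t]; ring
  rw [h6]
  rw [h5] at h3
  nlinarith [pow_nonneg habs 3]

theorem psi_scaling_limit (x y : ℕ → ℝ) (κ j : ℝ) (hκ : 0 < κ)
    (hx : ∀ N, 0 < x N) (hy : ∀ N, 0 < y N)
    (h1 : Tendsto (fun N : ℕ => (N : ℝ) / y N) atTop (nhds κ⁻¹))
    (h2 : Tendsto (fun N : ℕ => x N - y N) atTop (nhds j)) :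
    Tendsto (fun N : ℕ => (N : ℝ) * Psi (x N) (y N)) atTop (nhds (j^2 / (2 * κ))) := by
  have hyne : ∀ N, y N ≠ 0 := fun N => (hy N).ne'
  set t : ℕ → ℝ := fun N => x N / y N - 1 with htdef
  -- 1 / y N → 0
  have hyinv : Tendsto (fun N : ℕ => 1 / y N) atTop (nhds 0) := by
    have hmul := h1.mul tendsto_one_div_atTop_nhds_zero_nat
    rw [mul_zero] at hmul
    apply hmul.congr'
    filter_upwards [eventually_ge_atTop 1] with N hN
    have hN0 : (N:ℝ) ≠ 0 := Nat.cast_ne_zero.mpr (by omega)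
    field_simp
  -- t N → 0
  have ht0 : Tendsto t atTop (nhds 0) := by
    have hmul := h2.mul hyinv
    rw [mul_zero] at hmul
    apply hmul.congr
    intro N
    simp only [htdef]
    rw [mul_one_div, sub_div, div_self (hyne N)]
  -- (N / y N) * (x N - y N)^2 → κ⁻¹ * j^2
  have hA : Tendsto (fun N : ℕ => (N : ℝ) / y N * (x N - y N)^2) atTop
      (nhds (κ⁻¹ * j^2)) := h1.mul (h2.pow 2)
  -- the remainder term
  set h : ℕ → ℝ := fun N => (N : ℝ) * Psi (x N) (y N) - (N : ℝ) / y N * (x N - y N)^2 / 2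
    with hhdef
  have hyt : ∀ N, y N * t N = x N - y N := by
    intro N
    simp only [htdef]
    rw [mul_sub, mul_one, mul_comm (y N), div_mul_cancel₀ _ (hyne N)]
  have hNyy : ∀ N : ℕ, (N : ℝ) / y N * (y N)^2 = N * y N := by
    intro N
    rw [div_mul_eq_mul_div, sq, ← mul_assoc, mul_div_cancel_right₀ _ (hyne N)]
  have haux : ∀ N, h N = (N : ℝ) * y N *
      ((1 + t N) * Real.log (1 + t N) - t N - (t N)^2/2) := by
    intro N
    have h1t : (1:ℝ) + t N = x N / y N := by simp only [htdef]; ring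
    have e1 : y N * (x N / y N) = x N := by
      rw [mul_comm, div_mul_cancel₀ _ (hyne N)]
    have e4 : (N:ℝ) * y N * (t N)^2 = (N:ℝ) / y N * (x N - y N)^2 := by
      rw [← hyt N, ← hNyy N]; ring
    simp only [hhdef, Psi, h1t]
    calc (N:ℝ) * (x N * Real.log (x N / y N) + y N - x N)
          - (N:ℝ) / y N * (x N - y N) ^ 2 / 2
        = (N:ℝ) * (y N * (x N / y N)) * Real.log (x N / y N) - (N:ℝ) * (y N * t N)
          - (N:ℝ) / y N * (x N - y N) ^ 2 / 2 := by rw [e1, hyt N]; ring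
      _ = (N:ℝ) * y N * ((x N / y N) * Real.log (x N / y N) - t N - (t N)^2/2)
          - ((N:ℝ) / y N * (x N - y N) ^ 2 / 2 - (N:ℝ) * y N * (t N)^2/2) := by ring
      _ = (N:ℝ) * y N * ((x N / y N) * Real.log (x N / y N) - t N - (t N)^2/2) := by
          rw [← e4]; ring
  have hNy_nonneg : ∀ N : ℕ, 0 ≤ (N : ℝ) * y N := fun N =>
    mul_nonneg (Nat.cast_nonneg N) (hy N).le
  -- |h N| → 0
  have hh0 : Tendsto h atTop (nhds 0) := by
    have hev : ∀ᶠ N in atTop, |t N| ≤ 1/2 := by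
      have h' := ht0.abs
      rw [abs_zero] at h'
      exact h'.eventually_le_const (by norm_num)
    have habs : Tendsto (fun N => |h N|) atTop (nhds 0) := by
      apply squeeze_zero' (Eventually.of_forall fun N => abs_nonneg _)
        (g := fun N : ℕ => 4 * ((N : ℝ) / y N * (x N - y N)^2) * |t N|)
      · filter_upwards [hev] with N hN
        rw [haux N, abs_mul, abs_of_nonneg (hNy_nonneg N)]
        calc (N : ℝ) * y N * |(1 + t N) * Real.log (1 + t N) - t N - (t N)^2/2|
            ≤ (N : ℝ) * y N * (4 * (t N)^2 * |t N|) :=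
              mul_le_mul_of_nonneg_left (key_est (t N) hN) (hNy_nonneg N)
          _ = 4 * ((N : ℝ) / y N * (x N - y N)^2) * |t N| := by
              rw [← hyt N, ← hNyy N]; ring
      · have h4 := (hA.mul ht0.abs).const_mul 4
        simpa [mul_assoc] using h4
    exact (tendsto_zero_iff_abs_tendsto_zero h).mpr habs
  -- conclude
  have hfin := hh0.add (hA.div_const 2)
  have heq : (fun N => h N + (N : ℝ) / y N * (x N - y N)^2 / 2)
      = fun N : ℕ => (N : ℝ) * Psi (x N) (y N) := by
    funext N; rw [hhdef]; ring
  rw [heq] at hfin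
  have hval : (0:ℝ) + κ⁻¹ * j ^ 2 / 2 = j^2 / (2 * κ) := by
    rw [zero_add, inv_mul_eq_div, div_div, mul_comm κ 2]
  rwa [hval] at hfin
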